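/- arXiv:math/0406129 — 2 statements merged into one kernel-verified Lean document; each statement's English description precedes it below -/
import Mathlib

section
/- Every d-cocycle of total degree 4 in L lies in external degree 0, i.e. in the subspace 1 ⊗ B₄. Precisely: the total-degree-4 component of L is spanned by 1 ⊗ B₄ together with the elements δ, αβ, αγ, and if c₁, c₂, c₃ ∈ ℚ and u ∈ B₄ are such that x = c₁·δ + c₂·α·β + c₃·α·γ + 1⊗u satisfies d(x) = 0, then c₁ = c₂ = c₃ = 0. -/
/-!
Statement 9: in the Koszul complex `(L, d)`, `L = Λ(α,β,γ,δ) ⊗ B` with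
`B = ℚ[z,r,s]/⟨z(r−s)⟩`, `d(α) = z`, `d(β) = r²`, `d(γ) = s²`, `d(δ) = α(r²−s²)`, every
`d`-cocycle of total degree 4 lies in external degree 0, i.e. in `1 ⊗ B₄`.  Precisely, the
total-degree-4 component of `L` is spanned by `1 ⊗ B₄` together with `δ, αβ, αγ`, and if
`d(c₁δ + c₂αβ + c₃αγ + 1⊗u) = 0` with `u ∈ B₄` then `c₁ = c₂ = c₃ = 0`.
-/

set_option synthInstance.maxHeartbeats 1000000
set_option maxHeartbeats 2000000

noncomputable section

open MvPolynomial

/-- The polynomial ring ℚ[z,r,s]. -/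
abbrev P3 : Type := MvPolynomial (Fin 3) ℚ

/-- The ideal `⟨z(r−s)⟩`. -/
def relB : Ideal P3 := Ideal.span {(X 0 : P3) * (X 1 - X 2)}

/-- `B = ℚ[z,r,s]/⟨z(r−s)⟩`. -/
abbrev Bring : Type := P3 ⧸ relB

/-- The image of `z` in `B`. -/
def zB : Bring := Ideal.Quotient.mk relB (X 0)
/-- The image of `r` in `B`. -/
def rB : Bring := Ideal.Quotient.mk relB (X 1)
/-- The image of `s` in `B`. -/
def sB : Bring := Ideal.Quotient.mk relB (X 2)

/-- The degree-`m` (internal degree) component `B_m` of `B`, where `z, r, s` have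
degree 2. -/
def Bgrade (m : ℕ) : Submodule ℚ Bring :=
  if 2 ∣ m then
    Submodule.map (Ideal.Quotient.mkₐ ℚ relB).toLinearMap
      (homogeneousSubmodule (Fin 3) ℚ (m / 2))
  else ⊥

/-- Index of the `B`-basis of `L = Λ(α,β,γ,δ) ⊗ B`: the monomials
`δⁿ·α^{ε₁}·β^{ε₂}·γ^{ε₃}`, encoded as `(n, ε₁, ε₂, ε₃)`. -/
abbrev idxL : Type := ℕ × Bool × Bool × Bool

/-- `L = Λ(α,β,γ,δ) ⊗ B`, as the free `B`-module on the monomials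
`δⁿ·α^{ε₁}·β^{ε₂}·γ^{ε₃}`. -/
abbrev Lmod : Type := idxL →₀ Bring

/-- Total degree of the basis monomial `(n, ε₁, ε₂, ε₃)` (external + internal degree):
`δ` has total degree 4, `α` total degree 1, and `β, γ` total degree 3. -/
def Ldeg : idxL → ℕ :=
  fun p => 4 * p.1 + (if p.2.1 then 1 else 0) + (if p.2.2.1 then 3 else 0) +
    (if p.2.2.2 then 3 else 0)

/-- The part of the differential coming from `d(δⁿ) = n·δ^{n−1}·α·(r²−s²)`. -/
def dvalDelta : idxL → Lmod
  | (0, _, _, _) => 0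
  | (_ + 1, true, _, _) => 0
  | (n + 1, false, e2, e3) =>
      Finsupp.single (n, true, e2, e3) (((n : ℚ) + 1) • (rB ^ 2 - sB ^ 2))

/-- The part of the differential coming from `d(α) = z`, `d(β) = r²`, `d(γ) = s²`, extended
to the exterior monomials by the graded Leibniz rule. -/
def dvalExt : idxL → Lmod
  | (_, false, false, false) => 0
  | (n, true, false, false) => Finsupp.single (n, false, false, false) zB
  | (n, false, true, false) => Finsupp.single (n, false, false, false) (rB ^ 2)
  | (n, false, false, true) => Finsupp.single (n, false, false, false) (sB ^ 2)
  | (n, true, true, false) =>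
      Finsupp.single (n, false, true, false) zB -
        Finsupp.single (n, true, false, false) (rB ^ 2)
  | (n, true, false, true) =>
      Finsupp.single (n, false, false, true) zB -
        Finsupp.single (n, true, false, false) (sB ^ 2)
  | (n, false, true, true) =>
      Finsupp.single (n, false, false, true) (rB ^ 2) -
        Finsupp.single (n, false, true, false) (sB ^ 2)
  | (n, true, true, true) =>
      Finsupp.single (n, false, true, true) zB -
        Finsupp.single (n, true, false, true) (rB ^ 2) +
        Finsupp.single (n, true, true, false) (sB ^ 2)

/-- The value of the differential on the basis monomial `δⁿ·α^{ε₁}·β^{ε₂}·γ^{ε₃}`. -/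
def dval : idxL → Lmod := fun p => dvalDelta p + dvalExt p

/-- The `B`-linear differential `d` of the Koszul complex `L`, determined by
`d(α) = z`, `d(β) = r²`, `d(γ) = s²`, `d(δ) = α·(r²−s²)` and the graded Leibniz rule. -/
def dL : Lmod →ₗ[Bring] Lmod := Finsupp.linearCombination Bring dval

/-- `d`, as a ℚ-linear map. -/
def dQ : Lmod →ₗ[ℚ] Lmod := dL.restrictScalars ℚ

/-- The total-degree-`m` component of `L`: the span of the elements
`(basis monomial of total degree t) ⊗ (element of B_{m−t})`. -/
def LtotalGrade (m : ℕ) : Submodule ℚ Lmod :=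
  Submodule.span ℚ
    {w : Lmod | ∃ i u, Ldeg i ≤ m ∧ u ∈ Bgrade (m - Ldeg i) ∧ w = Finsupp.single i u}

/-- The element `δ` of `L`. -/
def δL : Lmod := Finsupp.single (1, false, false, false) 1
/-- The element `α·β` of `L`. -/
def abL : Lmod := Finsupp.single (0, true, true, false) 1
/-- The element `α·γ` of `L`. -/
def agL : Lmod := Finsupp.single (0, true, false, true) 1
/-- The embedding `B → L`, `u ↦ 1 ⊗ u`. -/
def embL : Bring →ₗ[ℚ] Lmod := Finsupp.lsingle (0, false, false, false)

/-!
A basis monomial of `L` of total degree at most 4 has total degree 0, 1, 3 or 4, and `B` vanishes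
in odd degrees, so only `1 ⊗ B₄` and the degree-4 monomials `δ, αβ, αγ` (with coefficients in
`B₀ = ℚ`) survive. As `d(1 ⊗ u) = 0`,
`d(c₁δ + c₂αβ + c₃αγ) = (c₁(r² − s²) − c₂r² − c₃s²)α + c₂zβ + c₃zγ`, and `z`, `r² − s²` are
nonzero in `B` (evaluate at the points `(1,1,1)` and `(0,1,0)` of `z(r − s) = 0`), so all `cᵢ`
vanish.
-/

def evalB (v : Fin 3 → ℚ) (hv : v 0 * (v 1 - v 2) = 0) : Bring →ₐ[ℚ] ℚ :=
  Ideal.Quotient.liftₐ relB (aeval v) fun p hp => by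
    obtain ⟨q, rfl⟩ := Ideal.mem_span_singleton'.mp hp
    simp [hv]

@[simp] lemma evalB_zB (v : Fin 3 → ℚ) (hv : v 0 * (v 1 - v 2) = 0) : evalB v hv zB = v 0 := by
  simp [evalB, zB, Ideal.Quotient.liftₐ_apply]

@[simp] lemma evalB_rB (v : Fin 3 → ℚ) (hv : v 0 * (v 1 - v 2) = 0) : evalB v hv rB = v 1 := by
  simp [evalB, rB, Ideal.Quotient.liftₐ_apply]

@[simp] lemma evalB_sB (v : Fin 3 → ℚ) (hv : v 0 * (v 1 - v 2) = 0) : evalB v hv sB = v 2 := by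
  simp [evalB, sB, Ideal.Quotient.liftₐ_apply]

lemma zB_ne_zero : zB ≠ 0 := fun h => by
  simpa using congrArg (evalB ![1, 1, 1] (by simp)) h

lemma rB_sq_sub_sB_sq_ne_zero : rB ^ 2 - sB ^ 2 ≠ 0 := fun h => by
  simpa using congrArg (evalB ![0, 1, 0] (by simp)) h

lemma Bgrade_eq_bot_of_not_two_dvd {m : ℕ} (h : ¬ 2 ∣ m) : Bgrade m = ⊥ := by
  rw [Bgrade, if_neg h]

lemma Bgrade_zero : Bgrade 0 = 1 := by
  rw [Bgrade, if_pos (dvd_zero 2), Nat.zero_div, homogeneousSubmodule_zero, Submodule.map_one]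

lemma Ldeg_eq_zero_iff {i : idxL} : Ldeg i = 0 ↔ i = (0, false, false, false) := by
  obtain ⟨n, _ | _, _ | _, _ | _⟩ := i <;> simp [Ldeg]

lemma Ldeg_ne_two (i : idxL) : Ldeg i ≠ 2 := by
  obtain ⟨n, _ | _, _ | _, _ | _⟩ := i <;> simp [Ldeg]
  omega

lemma Ldeg_eq_four_iff {i : idxL} :
    Ldeg i = 4 ↔
      i = (1, false, false, false) ∨ i = (0, true, true, false) ∨ i = (0, true, false, true) := by
  obtain ⟨n, _ | _, _ | _, _ | _⟩ := i <;> simp [Ldeg]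
  omega

lemma single_mem_LtotalGrade {m : ℕ} {i : idxL} {u : Bring} (hi : Ldeg i ≤ m)
    (hu : u ∈ Bgrade (m - Ldeg i)) : Finsupp.single i u ∈ LtotalGrade m :=
  Submodule.subset_span ⟨i, u, hi, hu, rfl⟩

lemma single_one_mem_LtotalGrade {m : ℕ} {i : idxL} (hi : Ldeg i = m) :
    Finsupp.single i 1 ∈ LtotalGrade m :=
  single_mem_LtotalGrade hi.le <| by
    rw [hi, Nat.sub_self, Bgrade_zero]
    exact Submodule.mem_one.mpr ⟨1, map_one _⟩

lemma single_mem_span_single_one {i : idxL} {u : Bring} (hu : u ∈ Bgrade 0) :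
    Finsupp.single i u ∈ ℚ ∙ Finsupp.single i (1 : Bring) := by
  rw [Bgrade_zero] at hu
  obtain ⟨c, rfl⟩ := Submodule.mem_one.mp hu
  rw [Algebra.algebraMap_eq_smul_one, ← Finsupp.smul_single]
  exact Submodule.smul_mem _ _ (Submodule.mem_span_singleton_self _)

lemma LtotalGrade_four_le :
    LtotalGrade 4 ≤ Submodule.map embL (Bgrade 4) ⊔ Submodule.span ℚ {δL, abL, agL} := by
  refine Submodule.span_le.mpr ?_
  rintro _ ⟨i, u, hi, hu, rfl⟩
  obtain hdeg | hdeg | hdeg | hdeg | hdeg :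
      Ldeg i = 0 ∨ Ldeg i = 1 ∨ Ldeg i = 2 ∨ Ldeg i = 3 ∨ Ldeg i = 4 := by omega
  · rw [Ldeg_eq_zero_iff.mp hdeg] at hu ⊢
    exact Submodule.mem_sup_left ⟨u, hu, rfl⟩
  · obtain rfl : u = 0 := by
      simpa [hdeg, Bgrade_eq_bot_of_not_two_dvd (show ¬ 2 ∣ 3 by decide)] using hu
    simp
  · exact absurd hdeg (Ldeg_ne_two i)
  · obtain rfl : u = 0 := by
      simpa [hdeg, Bgrade_eq_bot_of_not_two_dvd (show ¬ 2 ∣ 1 by decide)] using hu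
    simp
  · refine Submodule.mem_sup_right
      (Submodule.span_mono ?_ (single_mem_span_single_one (i := i) (by simpa [hdeg] using hu)))
    rcases Ldeg_eq_four_iff.mp hdeg with rfl | rfl | rfl <;> simp [δL, abL, agL]

lemma le_LtotalGrade_four :
    Submodule.map embL (Bgrade 4) ⊔ Submodule.span ℚ {δL, abL, agL} ≤ LtotalGrade 4 := by
  refine sup_le ?_ (Submodule.span_le.mpr ?_)
  · rintro _ ⟨u, hu, rfl⟩
    exact single_mem_LtotalGrade (by simp [Ldeg]) (by simpa [Ldeg] using hu)
  · rintro _ (rfl | rfl | rfl) <;> exact single_one_mem_LtotalGrade rfl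

lemma dQ_single (i : idxL) (u : Bring) : dQ (Finsupp.single i u) = u • dval i :=
  Finsupp.linearCombination_single _ _ _

lemma dQ_embL (u : Bring) : dQ (embL u) = 0 := by
  simp [embL, dQ_single, dval, dvalDelta, dvalExt]

lemma dQ_δL : dQ δL = Finsupp.single (0, true, false, false) (rB ^ 2 - sB ^ 2) := by
  simp [δL, dQ_single, dval, dvalDelta, dvalExt]

lemma dQ_abL :
    dQ abL = Finsupp.single (0, false, true, false) zB -
      Finsupp.single (0, true, false, false) (rB ^ 2) := by
  simp [abL, dQ_single, dval, dvalDelta, dvalExt]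

lemma dQ_agL :
    dQ agL = Finsupp.single (0, false, false, true) zB -
      Finsupp.single (0, true, false, false) (sB ^ 2) := by
  simp [agL, dQ_single, dval, dvalDelta, dvalExt]

lemma eq_zero_of_dQ_eq_zero {c₁ c₂ c₃ : ℚ} {u : Bring}
    (h : dQ (c₁ • δL + c₂ • abL + c₃ • agL + embL u) = 0) : c₁ = 0 ∧ c₂ = 0 ∧ c₃ = 0 := by
  simp only [map_add, map_smul, dQ_δL, dQ_abL, dQ_agL, dQ_embL, add_zero] at h
  have hβ : c₂ • zB = 0 := by simpa using congr($h (0, false, true, false))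
  have hγ : c₃ • zB = 0 := by simpa using congr($h (0, false, false, true))
  obtain rfl := (smul_eq_zero.mp hβ).resolve_right zB_ne_zero
  obtain rfl := (smul_eq_zero.mp hγ).resolve_right zB_ne_zero
  have hα : c₁ • (rB ^ 2 - sB ^ 2) = 0 := by simpa using congr($h (0, true, false, false))
  exact ⟨(smul_eq_zero.mp hα).resolve_right rB_sq_sub_sB_sq_ne_zero, rfl, rfl⟩

theorem statement9 :
    -- the total-degree-4 component of `L` is spanned by `1 ⊗ B₄` and `δ, αβ, αγ`
    LtotalGrade 4 = Submodule.map embL (Bgrade 4) ⊔ Submodule.span ℚ {δL, abL, agL} ∧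
    -- any cocycle of total degree 4 has vanishing components on `δ, αβ, αγ`
    (∀ (c₁ c₂ c₃ : ℚ) (u : Bring), u ∈ Bgrade 4 →
      dQ (c₁ • δL + c₂ • abL + c₃ • agL + embL u) = 0 →
      c₁ = 0 ∧ c₂ = 0 ∧ c₃ = 0) :=
  ⟨le_antisymm LtotalGrade_four_le le_LtotalGrade_four,
    fun _ _ _ _ _ h => eq_zero_of_dQ_eq_zero h⟩

end
end

section
/- The kernel of φ: P → H × H × K is a free group, freely generated by the set of commutators {[t, x] : t ∈ K∖{1}, x ∈ H∖{1}}, where [t,x] ∈ P denotes the commutator of the image in P of (1,t) ∈ H×K with the image in P of (1,x) ∈ H×H. In particular these commutators are pairwise distinct, each lies in ker φ, they generate ker φ, and the homomorphism from the free group on the set (K∖{1}) × (H∖{1}) to P sending the generator indexed by (t,x) to [t,x] is injective with image ker φ. -/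
/-!
Writing `(a, b) = (a, a) · (1, a⁻¹ b)` exhibits `P` as `(H ∗ K) ⋊ H`, with `H` acting on the free
factor `H` by conjugation and trivially on `K`. So every element of `P` should have a unique normal
form `j₂(a,1) · ρ(w) · j₁(1,x) · j₂(1,t)`, where `ρ` sends the free generator `(t,x)` to `[t,x]`.
To prove uniqueness, let `H × H` and `H × K` act on the quadruples `(a, w, x, t)` as left
multiplication on normal forms dictates; the two actions agree on the amalgamated `H`, so `P` acts.
The commutator `[t,x]` acts on `(1, w, x', t')` by multiplying `w` on the left by the generator
`(t,x)`, so `ρ` is injective; and `φ` sends the normal form to `(a, a x, t)`, so `ker φ` consists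
exactly of the elements `ρ(w)`.
-/
universe u

/-- The diagonal homomorphism `Δ : H → H × H`. -/
def diagHom (H : Type u) [Group H] : H →* H × H :=
  (MonoidHom.id H).prod (MonoidHom.id H)

/-- `g₁ : H × H → H × (H × K)`, `(a, b) ↦ (a, b, 1)`. -/
def gOne (H K : Type u) [Group H] [Group K] : H × H →* H × (H × K) :=
  (MonoidHom.fst H H).prod ((MonoidHom.inl H K).comp (MonoidHom.snd H H))

/-- `g₂ : H × K → H × (H × K)`, `(c, t) ↦ (c, c, t)`. -/
def gTwo (H K : Type u) [Group H] [Group K] : H × K →* H × (H × K) :=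
  (MonoidHom.fst H K).prod ((MonoidHom.fst H K).prod (MonoidHom.snd H K))

open scoped commutatorElement

section PermHom

variable {G X : Type*} [Group G]

def permHomOfAct (act : G → X → X) (one_act : ∀ x, act 1 x = x)
    (mul_act : ∀ g h x, act (g * h) x = act g (act h x)) : G →* Equiv.Perm X :=
  MonoidHom.mk'
    (fun g => ⟨act g, act g⁻¹, fun x => by rw [← mul_act, inv_mul_cancel, one_act],
      fun x => by rw [← mul_act, mul_inv_cancel, one_act]⟩)
    fun g h => Equiv.ext (mul_act g h)

@[simp]
lemma permHomOfAct_apply (act : G → X → X) (one_act : ∀ x, act 1 x = x)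
    (mul_act : ∀ g h x, act (g * h) x = act g (act h x)) (g : G) (x : X) :
    permHomOfAct act one_act mul_act g x = act g x :=
  rfl

end PermHom

lemma eq_mul_of_closure_eq_top {P X : Type*} [Group P] (σ : P →* Equiv.Perm X) (r : X → P)
    {S : Set P} (hS : Subgroup.closure S = ⊤) (h : ∀ s ∈ S, ∀ ξ, r (σ s ξ) = s * r ξ)
    (p : P) (ξ : X) : r (σ p ξ) = p * r ξ := by
  have hp : p ∈ Subgroup.closure S := hS ▸ Subgroup.mem_top p
  induction hp using Subgroup.closure_induction generalizing ξ with
  | mem s hs => exact h s hs ξ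
  | one => simp
  | mul q q' _ _ ihq ihq' => rw [map_mul, Equiv.Perm.mul_apply, ihq, ihq', mul_assoc]
  | inv q _ ih =>
    rw [eq_inv_mul_iff_mul_eq, ← ih, ← Equiv.Perm.mul_apply, ← map_mul, mul_inv_cancel,
      map_one, Equiv.Perm.one_apply]

theorem closure_range_union_range_eq_top_of_pushout {A G₁ G₂ P : Type u} [Group A] [Group G₁]
    [Group G₂] [Group P] {f₁ : A →* G₁} {f₂ : A →* G₂} {j₁ : G₁ →* P} {j₂ : G₂ →* P}
    (hcomm : j₁.comp f₁ = j₂.comp f₂)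
    (huniv : ∀ (Q : Type u) [Group Q] (q₁ : G₁ →* Q) (q₂ : G₂ →* Q),
      q₁.comp f₁ = q₂.comp f₂ → ∃! ψ : P →* Q, ψ.comp j₁ = q₁ ∧ ψ.comp j₂ = q₂) :
    Subgroup.closure (Set.range j₁ ∪ Set.range j₂) = ⊤ := by
  set S := Subgroup.closure (Set.range j₁ ∪ Set.range j₂)
  have mem₁ (g : G₁) : j₁ g ∈ S := Subgroup.subset_closure (.inl ⟨g, rfl⟩)
  have mem₂ (g : G₂) : j₂ g ∈ S := Subgroup.subset_closure (.inr ⟨g, rfl⟩)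
  obtain ⟨ψ, ⟨hψ₁, hψ₂⟩, -⟩ := huniv S (j₁.codRestrict S mem₁) (j₂.codRestrict S mem₂)
    (MonoidHom.ext fun a => Subtype.ext (DFunLike.congr_fun hcomm a))
  obtain ⟨_, -, huniq⟩ := huniv P j₁ j₂ hcomm
  have hid : S.subtype.comp ψ = MonoidHom.id P :=
    (huniq _ ⟨by rw [MonoidHom.comp_assoc, hψ₁]; rfl,
      by rw [MonoidHom.comp_assoc, hψ₂]; rfl⟩).trans
      (huniq _ ⟨MonoidHom.id_comp _, MonoidHom.id_comp _⟩).symm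
  refine eq_top_iff.mpr fun p _ => ?_
  have hψp : (ψ p : P) = p := DFunLike.congr_fun hid p
  exact hψp ▸ (ψ p).2

namespace DiagonalPushout

variable {H K : Type u} [Group H] [Group K]

abbrev CommIndex (H K : Type u) [Group H] [Group K] : Type u :=
  {t : K // t ≠ 1} × {x : H // x ≠ 1}

open Classical in
-- `1` when `t = 1` or `x = 1`, matching `⁅1, x⁆ = ⁅t, 1⁆ = 1`.
noncomputable def commGen (t : K) (x : H) : FreeGroup (CommIndex H K) :=
  if ht : t = 1 then 1 else if hx : x = 1 then 1 else FreeGroup.of (⟨t, ht⟩, ⟨x, hx⟩)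

@[simp]
lemma commGen_one_left (x : H) : commGen (1 : K) x = 1 := by
  simp [commGen]

@[simp]
lemma commGen_one_right (t : K) : commGen t (1 : H) = 1 := by
  simp [commGen]

lemma commGen_of_ne {t : K} {x : H} (ht : t ≠ 1) (hx : x ≠ 1) :
    commGen t x = FreeGroup.of (⟨t, ht⟩, ⟨x, hx⟩) := by
  simp [commGen, ht, hx]

lemma hom_ext_commGen {G : Type*} [Group G] {f g : FreeGroup (CommIndex H K) →* G}
    (h : ∀ (t : K) (x : H), f (commGen t x) = g (commGen t x)) : f = g :=
  FreeGroup.ext_hom _ _ fun p => by simpa only [commGen_of_ne p.1.2 p.2.2] using h p.1 p.2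

/- Conjugation by `j₁(1, y)` and by `j₂(1, u)`, transported to the free group through
`y ⁅t, x⁆ y⁻¹ = ⁅t, y⁆⁻¹ ⁅t, y x⁆` and `u ⁅t, x⁆ u⁻¹ = ⁅u t, x⁆ ⁅u, x⁆⁻¹`. -/
noncomputable def conjByH (y : H) : FreeGroup (CommIndex H K) →* FreeGroup (CommIndex H K) :=
  FreeGroup.lift fun p => (commGen p.1.1 y)⁻¹ * commGen p.1.1 (y * p.2.1)

noncomputable def conjByK (u : K) : FreeGroup (CommIndex H K) →* FreeGroup (CommIndex H K) :=
  FreeGroup.lift fun p => commGen (u * p.1.1) p.2.1 * (commGen u p.2.1)⁻¹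

lemma conjByH_commGen (y : H) (t : K) (x : H) :
    conjByH y (commGen t x) = (commGen t y)⁻¹ * commGen t (y * x) := by
  by_cases ht : t = 1
  · simp [ht]
  by_cases hx : x = 1
  · simp [hx]
  rw [commGen_of_ne ht hx, conjByH, FreeGroup.lift_apply_of]

lemma conjByK_commGen (u t : K) (x : H) :
    conjByK u (commGen t x) = commGen (u * t) x * (commGen u x)⁻¹ := by
  by_cases hx : x = 1
  · simp [hx]
  by_cases ht : t = 1
  · simp [ht]
  rw [commGen_of_ne ht hx, conjByK, FreeGroup.lift_apply_of]

lemma conjByH_one (w : FreeGroup (CommIndex H K)) : conjByH 1 w = w := by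
  suffices conjByH (1 : H) = MonoidHom.id _ from DFunLike.congr_fun this w
  exact hom_ext_commGen fun t x => by simp [conjByH_commGen]

lemma conjByH_mul (y y' : H) (w : FreeGroup (CommIndex H K)) :
    conjByH (y * y') w = conjByH y (conjByH y' w) := by
  suffices conjByH (y * y') = (conjByH y).comp (conjByH (K := K) y') from
    DFunLike.congr_fun this w
  refine hom_ext_commGen fun t x => ?_
  simp only [MonoidHom.comp_apply, conjByH_commGen, map_mul, map_inv, mul_assoc]
  group

lemma conjByK_one (w : FreeGroup (CommIndex H K)) : conjByK 1 w = w := by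
  suffices conjByK (1 : K) = MonoidHom.id _ from DFunLike.congr_fun this w
  exact hom_ext_commGen fun t x => by simp [conjByK_commGen]

lemma conjByK_mul (u u' : K) (w : FreeGroup (CommIndex H K)) :
    conjByK (u * u') w = conjByK u (conjByK u' w) := by
  suffices conjByK (u * u') = (conjByK (H := H) u).comp (conjByK u') from
    DFunLike.congr_fun this w
  refine hom_ext_commGen fun t x => ?_
  simp only [MonoidHom.comp_apply, conjByK_commGen, map_mul, map_inv, mul_assoc]
  group

lemma conjByK_conjByH_conjByK_inv_conjByH_inv (t : K) (x : H) (w : FreeGroup (CommIndex H K)) :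
    conjByK t (conjByH x (conjByK t⁻¹ (conjByH x⁻¹ w))) = commGen t x * w * (commGen t x)⁻¹ := by
  suffices (conjByK t).comp ((conjByH x).comp ((conjByK t⁻¹).comp (conjByH x⁻¹))) =
      (MulAut.conj (commGen t x)).toMonoidHom from DFunLike.congr_fun this w
  refine hom_ext_commGen fun s y => ?_
  simp only [MonoidHom.comp_apply, MulEquiv.coe_toMonoidHom, MulAut.conj_apply, conjByH_commGen,
    conjByK_commGen, map_mul, map_inv, mul_inv_rev, inv_inv, mul_inv_cancel_left, mul_inv_cancel,
    commGen_one_left, commGen_one_right, one_mul, mul_one]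
  group

-- `(a, w, x, t)` stands for `j₂(a,1) · commLift w · j₁(1,x) · j₂(1,t)`, see `realize`.
abbrev NormalForm (H K : Type u) [Group H] [Group K] : Type u :=
  H × FreeGroup (CommIndex H K) × H × K

/- `j₁ (g₁, g₂) · j₂(a,1) = j₂(g₁ a, 1) · j₁(1, z)` with `z = a⁻¹ g₁⁻¹ g₂ a`, because the diagonal
of `H × H` is identified with `H × 1 ⊆ H × K`. -/
noncomputable def actHH (g : H × H) (ξ : NormalForm H K) : NormalForm H K :=
  (g.1 * ξ.1, conjByH (ξ.1⁻¹ * g.1⁻¹ * g.2 * ξ.1) ξ.2.1, ξ.1⁻¹ * g.1⁻¹ * g.2 * ξ.1 * ξ.2.2.1,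
    ξ.2.2.2)

-- `u · commLift w · x = (u · commLift w · u⁻¹) · ⁅u, x⁆ · x · u` for `u = j₂(1,u)`, `x = j₁(1,x)`.
noncomputable def actHK (g : H × K) (ξ : NormalForm H K) : NormalForm H K :=
  (g.1 * ξ.1, conjByK g.2 ξ.2.1 * commGen g.2 ξ.2.2.1, ξ.2.2.1, g.2 * ξ.2.2.2)

lemma actHH_one (ξ : NormalForm H K) : actHH 1 ξ = ξ := by
  simp [actHH, conjByH_one]

lemma actHH_mul (g g' : H × H) (ξ : NormalForm H K) :
    actHH (g * g') ξ = actHH g (actHH g' ξ) := by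
  obtain ⟨a, w, x, t⟩ := ξ
  simp only [actHH, Prod.fst_mul, Prod.snd_mul, mul_inv_rev, ← conjByH_mul]
  exact Prod.ext (mul_assoc _ _ _) (Prod.ext (congrArg (conjByH · w) (by group))
    (Prod.ext (by group) rfl))

lemma actHK_one (ξ : NormalForm H K) : actHK 1 ξ = ξ := by
  simp [actHK, conjByK_one]

lemma actHK_mul (g g' : H × K) (ξ : NormalForm H K) :
    actHK (g * g') ξ = actHK g (actHK g' ξ) := by
  obtain ⟨a, w, x, t⟩ := ξ
  simp only [actHK, Prod.fst_mul, Prod.snd_mul, conjByK_mul, map_mul, conjByK_commGen, mul_assoc,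
    inv_mul_cancel, mul_one]

noncomputable def permHH : H × H →* Equiv.Perm (NormalForm H K) :=
  permHomOfAct actHH actHH_one actHH_mul

noncomputable def permHK : H × K →* Equiv.Perm (NormalForm H K) :=
  permHomOfAct actHK actHK_one actHK_mul

lemma permHH_comp_diagHom :
    permHH.comp (diagHom H) = (permHK (K := K)).comp (MonoidHom.inl H K) := by
  refine MonoidHom.ext fun a => Equiv.ext fun ξ => ?_
  simp [permHH, permHK, actHH, actHK, diagHom, conjByH_one, conjByK_one]

lemma commutator_permHK_permHH_apply (t : K) (x : H) (w : FreeGroup (CommIndex H K)) (y : H)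
    (s : K) : ⁅permHK ((1 : H), t), permHH ((1 : H), x)⁆ ((1, w, y, s) : NormalForm H K) =
      (1, commGen t x * w, y, s) := by
  rw [commutatorElement_def, ← map_inv, ← map_inv, Prod.inv_mk, Prod.inv_mk, inv_one]
  simp only [Equiv.Perm.mul_apply, permHH, permHK, permHomOfAct_apply, actHH, actHK, one_mul,
    mul_one, inv_one, mul_inv_cancel_left]
  rw [map_mul, map_mul, conjByK_conjByH_conjByK_inv_conjByH_inv, conjByH_commGen, map_mul,
    map_inv, conjByK_commGen, conjByK_commGen, mul_inv_cancel, mul_inv_cancel_left]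
  simp only [commGen_one_left]
  group

section Realization

variable {P : Type u} [Group P] (j₁ : H × H →* P) (j₂ : H × K →* P)

noncomputable def commLift : FreeGroup (CommIndex H K) →* P :=
  FreeGroup.lift fun p => ⁅j₂ (1, p.1.1), j₁ (1, p.2.1)⁆

lemma commLift_of (p : CommIndex H K) :
    commLift j₁ j₂ (FreeGroup.of p) = ⁅j₂ (1, p.1.1), j₁ (1, p.2.1)⁆ :=
  FreeGroup.lift_apply_of

lemma commLift_commGen (t : K) (x : H) :
    commLift j₁ j₂ (commGen t x) = ⁅j₂ (1, t), j₁ (1, x)⁆ := by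
  by_cases ht : t = 1
  · rw [ht, commGen_one_left, Prod.mk_one_one, map_one, map_one, commutatorElement_one_left]
  by_cases hx : x = 1
  · rw [hx, commGen_one_right, Prod.mk_one_one, map_one, map_one, commutatorElement_one_right]
  rw [commGen_of_ne ht hx, commLift_of]

lemma commLift_conjByH (y : H) (w : FreeGroup (CommIndex H K)) :
    commLift j₁ j₂ (conjByH y w) = j₁ (1, y) * commLift j₁ j₂ w * (j₁ (1, y))⁻¹ := by
  suffices (commLift j₁ j₂).comp (conjByH y) =
      (MulAut.conj (j₁ (1, y))).toMonoidHom.comp (commLift j₁ j₂) from DFunLike.congr_fun this w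
  refine hom_ext_commGen fun t x => ?_
  have hmul : j₁ (1, y * x) = j₁ (1, y) * j₁ (1, x) := by rw [← map_mul, Prod.mk_mul_mk, one_mul]
  simp only [MonoidHom.comp_apply, conjByH_commGen, map_mul, map_inv, commLift_commGen, hmul,
    MulEquiv.coe_toMonoidHom, MulAut.conj_apply, commutatorElement_def]
  group

lemma commLift_conjByK (u : K) (w : FreeGroup (CommIndex H K)) :
    commLift j₁ j₂ (conjByK u w) = j₂ (1, u) * commLift j₁ j₂ w * (j₂ (1, u))⁻¹ := by
  suffices (commLift j₁ j₂).comp (conjByK u) =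
      (MulAut.conj (j₂ (1, u))).toMonoidHom.comp (commLift j₁ j₂) from DFunLike.congr_fun this w
  refine hom_ext_commGen fun t x => ?_
  have hmul : j₂ (1, u * t) = j₂ (1, u) * j₂ (1, t) := by rw [← map_mul, Prod.mk_mul_mk, one_mul]
  simp only [MonoidHom.comp_apply, conjByK_commGen, map_mul, map_inv, commLift_commGen, hmul,
    MulEquiv.coe_toMonoidHom, MulAut.conj_apply, commutatorElement_def]
  group

noncomputable def realize (ξ : NormalForm H K) : P :=
  j₂ (ξ.1, 1) * commLift j₁ j₂ ξ.2.1 * j₁ (1, ξ.2.2.1) * j₂ (1, ξ.2.2.2)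

lemma realize_one_mk_one_one (w : FreeGroup (CommIndex H K)) :
    realize j₁ j₂ (1, w, 1, 1) = commLift j₁ j₂ w := by
  simp only [realize, Prod.mk_one_one, map_one, one_mul, mul_one]

lemma realize_actHH (hcomm : j₁.comp (diagHom H) = j₂.comp (MonoidHom.inl H K))
    (g : H × H) (ξ : NormalForm H K) : realize j₁ j₂ (actHH g ξ) = j₁ g * realize j₁ j₂ ξ := by
  obtain ⟨a, w, x, t⟩ := ξ
  have hdiag (b : H) : j₂ (b, 1) = j₁ (b, b) := (DFunLike.congr_fun hcomm b).symm
  set z := a⁻¹ * g.1⁻¹ * g.2 * a with hz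
  have hmove : j₂ (g.1 * a, 1) * j₁ (1, z) = j₁ g * j₂ (a, 1) := by
    rw [hdiag, hdiag, ← map_mul, ← map_mul, Prod.mk_mul_mk, Prod.mk_mul_mk]
    exact congrArg j₁ (Prod.ext (by group) (by rw [hz]; group))
  clear_value z
  have hsplit : j₁ (1, z * x) = j₁ (1, z) * j₁ (1, x) := by
    rw [← map_mul, Prod.mk_mul_mk, one_mul]
  simp only [realize, actHH]
  rw [← hz, commLift_conjByH, hsplit]
  simp only [mul_assoc, inv_mul_cancel_left]
  rw [← mul_assoc (j₂ _), hmove, mul_assoc]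

lemma realize_actHK (g : H × K) (ξ : NormalForm H K) :
    realize j₁ j₂ (actHK g ξ) = j₂ g * realize j₁ j₂ ξ := by
  obtain ⟨a, w, x, t⟩ := ξ
  have hmove : j₂ (g.1 * a, 1) * j₂ (1, g.2) = j₂ g * j₂ (a, 1) := by
    rw [← map_mul, ← map_mul, Prod.mk_mul_mk, Prod.mk_mul_mk]
    exact congrArg j₂ (Prod.ext (by group) (by group))
  have hsplit : j₂ (1, g.2 * t) = j₂ (1, g.2) * j₂ (1, t) := by
    rw [← map_mul, Prod.mk_mul_mk, one_mul]
  simp only [realize, actHK, map_mul, commLift_conjByK, commLift_commGen, hsplit,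
    commutatorElement_def, mul_assoc, inv_mul_cancel_left]
  rw [← mul_assoc (j₂ _), hmove, mul_assoc]

end Realization

section Kernel

variable {P : Type u} [Group P] {j₁ : H × H →* P} {j₂ : H × K →* P} {φ : P →* H × (H × K)}

lemma commutator_mem_ker (hφ₁ : φ.comp j₁ = gOne H K) (hφ₂ : φ.comp j₂ = gTwo H K) (t : K)
    (x : H) : ⁅j₂ (1, t), j₁ (1, x)⁆ ∈ φ.ker := by
  rw [MonoidHom.mem_ker, map_commutatorElement, ← MonoidHom.comp_apply, ← MonoidHom.comp_apply,
    hφ₁, hφ₂]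
  simp [gOne, gTwo, commutatorElement_def]

lemma range_commLift_le_ker (hφ₁ : φ.comp j₁ = gOne H K) (hφ₂ : φ.comp j₂ = gTwo H K) :
    (commLift j₁ j₂).range ≤ φ.ker :=
  (MonoidHom.range_le_ker_iff _ _).mpr <| FreeGroup.ext_hom _ _ fun p => by
    rw [MonoidHom.comp_apply, commLift_of]
    exact commutator_mem_ker hφ₁ hφ₂ _ _

lemma map_realize (hφ₁ : φ.comp j₁ = gOne H K) (hφ₂ : φ.comp j₂ = gTwo H K) (a : H)
    (w : FreeGroup (CommIndex H K)) (x : H) (t : K) :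
    φ (realize j₁ j₂ (a, w, x, t)) = (a, a * x, t) := by
  have h₁ (g : H × H) : φ (j₁ g) = gOne H K g := DFunLike.congr_fun hφ₁ g
  have h₂ (g : H × K) : φ (j₂ g) = gTwo H K g := DFunLike.congr_fun hφ₂ g
  have hw : φ (commLift j₁ j₂ w) = 1 := range_commLift_le_ker hφ₁ hφ₂ ⟨w, rfl⟩
  simp [realize, h₁, h₂, hw, gOne, gTwo]

lemma perm_commLift_apply {ψ : P →* Equiv.Perm (NormalForm H K)} (hψ₁ : ψ.comp j₁ = permHH)
    (hψ₂ : ψ.comp j₂ = permHK) (w f : FreeGroup (CommIndex H K)) (x : H) (t : K) :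
    ψ (commLift j₁ j₂ w) (1, f, x, t) = (1, w * f, x, t) := by
  induction w generalizing f with
  | C1 => simp
  | of p =>
    rw [commLift_of, map_commutatorElement, ← MonoidHom.comp_apply ψ j₁,
      ← MonoidHom.comp_apply ψ j₂, hψ₁, hψ₂, commutator_permHK_permHH_apply,
      commGen_of_ne p.1.2 p.2.2]
  | inv_of p ih =>
    rw [map_inv, map_inv, Equiv.Perm.inv_eq_iff_eq, ih, mul_inv_cancel_left]
  | mul w v ihw ihv => rw [map_mul, map_mul, Equiv.Perm.mul_apply, ihv, ihw, mul_assoc]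

lemma realize_perm_apply (hcomm : j₁.comp (diagHom H) = j₂.comp (MonoidHom.inl H K))
    (hgen : Subgroup.closure (Set.range j₁ ∪ Set.range j₂) = ⊤)
    {ψ : P →* Equiv.Perm (NormalForm H K)} (hψ₁ : ψ.comp j₁ = permHH)
    (hψ₂ : ψ.comp j₂ = permHK) (p : P) (ξ : NormalForm H K) :
    realize j₁ j₂ (ψ p ξ) = p * realize j₁ j₂ ξ := by
  refine eq_mul_of_closure_eq_top ψ (realize j₁ j₂) hgen ?_ p ξ
  rintro _ (⟨g, rfl⟩ | ⟨g, rfl⟩) ξ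
  · rw [← MonoidHom.comp_apply ψ j₁, hψ₁]
    exact realize_actHH j₁ j₂ hcomm g ξ
  · rw [← MonoidHom.comp_apply ψ j₂, hψ₂]
    exact realize_actHK j₁ j₂ g ξ

variable (huniv : ∀ (Q : Type u) [Group Q] (q₁ : H × H →* Q) (q₂ : H × K →* Q),
  q₁.comp (diagHom H) = q₂.comp (MonoidHom.inl H K) →
  ∃! ψ : P →* Q, ψ.comp j₁ = q₁ ∧ ψ.comp j₂ = q₂)

include huniv in
theorem commLift_injective : Function.Injective (commLift j₁ j₂) := by
  obtain ⟨ψ, ⟨hψ₁, hψ₂⟩, -⟩ := huniv _ permHH permHK permHH_comp_diagHom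
  intro w v h
  simpa [perm_commLift_apply hψ₁ hψ₂] using
    congrArg (fun p => (ψ p (1, 1, 1, 1)).2.1) h

include huniv in
theorem range_commLift_eq_ker (hcomm : j₁.comp (diagHom H) = j₂.comp (MonoidHom.inl H K))
    (hφ₁ : φ.comp j₁ = gOne H K) (hφ₂ : φ.comp j₂ = gTwo H K) :
    (commLift j₁ j₂).range = φ.ker := by
  refine le_antisymm (range_commLift_le_ker hφ₁ hφ₂) fun p hp => ?_
  obtain ⟨ψ, ⟨hψ₁, hψ₂⟩, -⟩ := huniv _ permHH permHK permHH_comp_diagHom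
  have hgen := closure_range_union_range_eq_top_of_pushout hcomm huniv
  have hrealize : realize j₁ j₂ (ψ p (1, 1, 1, 1)) = p := by
    rw [realize_perm_apply hcomm hgen hψ₁ hψ₂, realize_one_mk_one_one, map_one, mul_one]
  rcases hξ : ψ p (1, 1, 1, 1) with ⟨a, w, x, t⟩
  rw [hξ] at hrealize
  have hφp : (a, a * x, t) = 1 := by rw [← map_realize hφ₁ hφ₂, hrealize, MonoidHom.mem_ker.mp hp]
  obtain ⟨rfl, hx, rfl⟩ : a = 1 ∧ a * x = 1 ∧ t = 1 := by simpa using hφp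
  obtain rfl : x = 1 := by simpa using hx
  exact ⟨w, by rw [← hrealize, realize_one_mk_one_one]⟩

end Kernel

end DiagonalPushout

open DiagonalPushout in
theorem statement12 {H K P : Type u} [Group H] [Group K] [Group P]
    (j₁ : H × H →* P) (j₂ : H × K →* P)
    -- `P`, together with `j₁`, `j₂`, is the pushout of `Δ` and `i = inl`:
    (hcomm : j₁.comp (diagHom H) = j₂.comp (MonoidHom.inl H K))
    (huniv : ∀ (Q : Type u) [Group Q] (q₁ : H × H →* Q) (q₂ : H × K →* Q),
      q₁.comp (diagHom H) = q₂.comp (MonoidHom.inl H K) →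
      ∃! ψ : P →* Q, ψ.comp j₁ = q₁ ∧ ψ.comp j₂ = q₂)
    -- `φ` is the induced homomorphism to `H × H × K`:
    (φ : P →* H × (H × K))
    (hφ₁ : φ.comp j₁ = gOne H K) (hφ₂ : φ.comp j₂ = gTwo H K) :
    -- each commutator `[t,x]` lies in `ker φ`,
    (∀ (t : K) (x : H), ⁅j₂ (1, t), j₁ (1, x)⁆ ∈ MonoidHom.ker φ) ∧
    -- the commutators `[t,x]`, `t ≠ 1`, `x ≠ 1`, are pairwise distinct,
    Function.Injective (fun p : {t : K // t ≠ 1} × {x : H // x ≠ 1} =>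
      ⁅j₂ (1, p.1.1), j₁ (1, p.2.1)⁆) ∧
    -- and the homomorphism from the free group on `(K∖{1}) × (H∖{1})` sending the
    -- generator indexed by `(t,x)` to `[t,x]` is injective with image `ker φ`;
    -- in particular `ker φ` is free, freely generated by these commutators.
    (∀ ρ : FreeGroup ({t : K // t ≠ 1} × {x : H // x ≠ 1}) →* P,
      (∀ p : {t : K // t ≠ 1} × {x : H // x ≠ 1},
        ρ (FreeGroup.of p) = ⁅j₂ (1, p.1.1), j₁ (1, p.2.1)⁆) →
      Function.Injective ρ ∧ MonoidHom.range ρ = MonoidHom.ker φ) := by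
  refine ⟨commutator_mem_ker hφ₁ hφ₂, fun p q h => ?_, fun ρ hρ => ?_⟩
  · refine FreeGroup.of_injective (commLift_injective huniv ?_)
    rw [commLift_of, commLift_of]
    exact h
  · obtain rfl : ρ = commLift j₁ j₂ := FreeGroup.ext_hom _ _ fun p => by rw [hρ, commLift_of]
    exact ⟨commLift_injective huniv, range_commLift_eq_ker huniv hcomm hφ₁ hφ₂⟩
end
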